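/- Let f = (f_0, f_1, f_2, …) ∈ U_FM(T, E^ℕ), where each f_j ∈ H(T,E) and E^ℕ carries the product topology induced by the translation-invariant metric d̃(x,y) = Σ_{n} 2^{-n} d(x_n,y_n)/(1+d(x_n,y_n)). Then every non-zero finite 𝔽-linear combination a_1 f_{j_1} + … + a_m f_{j_m} of the components f_j belongs to U_FM(T,E); that is, the linear span ⟨f_0, f_1, …⟩ is contained in U_FM(T,E) ∪ {0}. -/

import Mathlib

open MeasureTheory Filter Topology

/-- A rooted tree with finite levels `T n`, a singleton root level, a parent map,
and at least two children for every vertex. -/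
structure TreeData where
  T : ℕ → Type
  fint : ∀ n, Fintype (T n)
  rootSubsingleton : ∀ x y : T 0, x = y
  rootNonempty : Nonempty (T 0)
  par : ∀ n, T (n + 1) → T n
  twoChildren : ∀ n (x : T n), 2 ≤ Nat.card {y : T (n + 1) // par n y = x}

instance (D : TreeData) (n : ℕ) : Fintype (D.T n) := D.fint n

noncomputable instance (D : TreeData) (n : ℕ) (x : D.T n) :
    Fintype {y : D.T (n + 1) // D.par n y = x} := by
  classical exact Subtype.fintype _

/-- The set of vertices of the tree. -/
def TreeData.Vert (D : TreeData) : Type := Σ n, D.T n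

/-- The boundary `∂T` : infinite geodesics starting at the root. -/
def TreeData.Boundary (D : TreeData) : Type :=
  {e : ∀ n, D.T n // ∀ n, D.par n (e (n + 1)) = e n}

/-- The boundary sector `B_x` of geodesics through `x`. -/
def TreeData.sector (D : TreeData) (n : ℕ) (x : D.T n) : Set D.Boundary :=
  {e | e.1 n = x}

/-- The σ-algebra `M_m` generated by the sectors at level `m`. -/
def TreeData.levelMS (D : TreeData) (m : ℕ) : MeasurableSpace D.Boundary :=
  MeasurableSpace.generateFrom {s | ∃ x : D.T m, s = D.sector m x}

/-- The σ-algebra `M` generated by all boundary sectors. -/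
instance TreeData.boundaryMS (D : TreeData) : MeasurableSpace D.Boundary :=
  MeasurableSpace.generateFrom {s | ∃ n, ∃ x : D.T n, s = D.sector n x}

/-- The probability `∏_{j<n} q(y_j, y_{j+1})` of the path from the root to a vertex. -/
def TreeData.pathProb (D : TreeData) (q : ∀ n, D.T (n + 1) → ℝ) :
    ∀ n, D.T n → ℝ
  | 0, _ => 1
  | n + 1, y => D.pathProb q n (D.par n y) * q n y

/-- `f : T → E` is generalized harmonic: `f x = ∑_{y ∈ S x} w x y • f y`. -/
def TreeData.Harmonic (D : TreeData) {𝔽 E : Type} [Field 𝔽] [AddCommGroup E]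
    [Module 𝔽 E] (w : ∀ n, D.T (n + 1) → 𝔽) (f : D.Vert → E) : Prop :=
  ∀ n (x : D.T n),
    f ⟨n, x⟩ = ∑ y : {y : D.T (n + 1) // D.par n y = x}, w n y.1 • f ⟨n + 1, y.1⟩

/-- The set `H(T,E)` of generalized harmonic functions. -/
def TreeData.harmonicSet (D : TreeData) {𝔽 : Type} (E : Type) [Field 𝔽] [AddCommGroup E]
    [Module 𝔽 E] (w : ∀ n, D.T (n + 1) → 𝔽) : Set (D.Vert → E) :=
  {f | D.Harmonic w f}

/-- `ω_n(f) : ∂T → E`. -/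
def TreeData.omegaMap (D : TreeData) {E : Type} (f : D.Vert → E) (n : ℕ)
    (e : D.Boundary) : E := f ⟨n, e.1 n⟩

/-- The pseudometric of convergence in probability associated to a distance `ρ`. -/
noncomputable def TreeData.dPgen (D : TreeData) (P : Measure D.Boundary) {α : Type}
    (ρ : α → α → ℝ) (h g : D.Boundary → α) : ℝ :=
  ∫ e, ρ (h e) (g e) / (1 + ρ (h e) (g e)) ∂P

/-- The metric `d_ℙ` of convergence in probability on `L⁰(∂T, E)`. -/
noncomputable def TreeData.dP (D : TreeData) (P : Measure D.Boundary) {E : Type}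
    [MetricSpace E] (h g : D.Boundary → E) : ℝ :=
  D.dPgen P dist h g

/-- The translation invariant metric `d̃` on `E ^ ℕ` inducing the product topology. -/
noncomputable def dTilde {E : Type} [MetricSpace E] (x y : ℕ → E) : ℝ :=
  ∑' n : ℕ, (1 / 2 : ℝ) ^ n * (dist (x n) (y n) / (1 + dist (x n) (y n)))

/-- Lower density of a set of natural numbers. -/
noncomputable def lowerDensity (A : Set ℕ) : ℝ :=
  Filter.liminf (fun N : ℕ => ((A ∩ Set.Iio N).ncard : ℝ) / N) Filter.atTop

/-- Upper density of a set of natural numbers. -/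
noncomputable def upperDensity (A : Set ℕ) : ℝ :=
  Filter.limsup (fun N : ℕ => ((A ∩ Set.Iio N).ncard : ℝ) / N) Filter.atTop

/-- `f ∈ U_τ(T,E)` : the family `(ω_n f)_{n ∈ τ}` is dense in `L⁰(∂T,E)`. -/
def TreeData.UnivOn (D : TreeData) (P : Measure D.Boundary) {E : Type}
    [MetricSpace E] [MeasurableSpace E] (τ : Set ℕ) (f : D.Vert → E) : Prop :=
  ∀ h : D.Boundary → E, Measurable h → ∀ ε > 0, ∃ n ∈ τ, D.dP P (D.omegaMap f n) h < ε

/-- `f ∈ U_FM(T,E)` : for every nonempty open subset `V` of `L⁰(∂T,E)` (equivalently,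
every ball) the set `{n | ω_n f ∈ V}` has strictly positive lower density. -/
def TreeData.FreqUniv (D : TreeData) (P : Measure D.Boundary) {E : Type}
    [MetricSpace E] [MeasurableSpace E] (f : D.Vert → E) : Prop :=
  ∀ h : D.Boundary → E, Measurable h → ∀ ε > 0,
    0 < lowerDensity {n | D.dP P (D.omegaMap f n) h < ε}

/-- `f ∈ U_FM^τ(T,E)` for `τ` enumerated by `ns`. -/
def TreeData.FreqUnivAlong (D : TreeData) (P : Measure D.Boundary) {E : Type}
    [MetricSpace E] [MeasurableSpace E] (ns : ℕ → ℕ) (f : D.Vert → E) : Prop :=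
  ∀ h : D.Boundary → E, Measurable h → ∀ ε > 0,
    0 < lowerDensity {k | D.dP P (D.omegaMap f (ns k)) h < ε}

/-- `f ∈ X(T,E)` : for every nonempty open subset `V` of `L⁰(∂T,E)` (equivalently,
every ball) the set `{n | ω_n f ∈ V}` has upper density `1`. -/
def TreeData.UpperUniv (D : TreeData) (P : Measure D.Boundary) {E : Type}
    [MetricSpace E] [MeasurableSpace E] (f : D.Vert → E) : Prop :=
  ∀ h : D.Boundary → E, Measurable h → ∀ ε > 0,
    upperDensity {n | D.dP P (D.omegaMap f n) h < ε} = 1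

/-- `f ∈ U_FM(T, E^ℕ)` where `E^ℕ` carries the metric `d̃`. -/
def TreeData.FreqUnivPi (D : TreeData) (P : Measure D.Boundary) {E : Type}
    [MetricSpace E] [MeasurableSpace E] (f : D.Vert → (ℕ → E)) : Prop :=
  ∀ h : D.Boundary → (ℕ → E), Measurable h → ∀ ε > 0,
    0 < lowerDensity {n | D.dPgen P dTilde (D.omegaMap f n) h < ε}

variable {𝔽 E : Type} [Field 𝔽] [TopologicalSpace 𝔽] [T2Space 𝔽]
  [TopologicalSpace.SeparableSpace 𝔽] [ContinuousAdd 𝔽] [ContinuousInv₀ 𝔽]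
  [AddCommGroup E] [Module 𝔽 E] [MetricSpace E]
  [TopologicalSpace.SeparableSpace E] [ContinuousAdd E] [ContinuousSMul 𝔽 E]
  [MeasurableSpace E] [BorelSpace E]

/-!
A combination `g = ∑ c j • f_j` is `Ψ ∘ f` for the continuous additive map
`Ψ u = ∑ c j • u j` on `E^ℕ`, which has the measurable section `x ↦ Pi.single j₀ ((c j₀)⁻¹ • x)`
for any `j₀` with `c j₀ ≠ 0`. As the metrics are translation invariant, `Ψ` is uniformly
continuous from `d̃` to `d`, and Markov's inequality turns this into
`d_ℙ(Ψ ∘ φ, Ψ ∘ ψ) ≤ ε + C_η · d̃_ℙ(φ, ψ)`. Hence every `n` for which `ω_n f` is close to the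
section of a target `h` has `ω_n g` close to `h`, and those `n` have positive lower density.
-/

section DivOneAdd

variable {s t : ℝ}

lemma div_one_add_self_nonneg (ht : 0 ≤ t) : 0 ≤ t / (1 + t) :=
  div_nonneg ht (by linarith)

lemma div_one_add_self_le_one (ht : 0 ≤ t) : t / (1 + t) ≤ 1 :=
  (div_le_one (by linarith)).2 (by linarith)

lemma div_one_add_self_le_self (ht : 0 ≤ t) : t / (1 + t) ≤ t :=
  div_le_self ht (by linarith)

lemma div_one_add_self_le_div_one_add_self (hs : 0 ≤ s) (hst : s ≤ t) :
    s / (1 + s) ≤ t / (1 + t) := by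
  rw [div_le_div_iff₀ (by linarith) (by linarith)]
  nlinarith

end DivOneAdd

section ConvergenceInProbability

variable {α : Type*} [MeasurableSpace α] {P : Measure α} {a b : α → ℝ} {ε η : ℝ}

lemma integrable_div_one_add_self [IsFiniteMeasure P] (hb : Measurable b) (hb0 : ∀ x, 0 ≤ b x) :
    Integrable (fun x => b x / (1 + b x)) P := by
  refine Integrable.mono' (integrable_const 1)
    (hb.div (measurable_const.add hb)).aestronglyMeasurable (ae_of_all _ fun x => ?_)
  rw [Real.norm_eq_abs, abs_of_nonneg (div_one_add_self_nonneg (hb0 x))]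
  exact div_one_add_self_le_one (hb0 x)

lemma measureReal_le_le_mul_integral_div_one_add_self [IsFiniteMeasure P] (hb : Measurable b)
    (hb0 : ∀ x, 0 ≤ b x) (hη : 0 < η) :
    P.real {x | η ≤ b x} ≤ (1 + η) / η * ∫ x, b x / (1 + b x) ∂P := by
  have hmarkov := mul_meas_ge_le_integral_of_nonneg
    (ae_of_all _ fun x => div_one_add_self_nonneg (hb0 x))
    (integrable_div_one_add_self (P := P) hb hb0) (η / (1 + η))
  have hsub : {x | η ≤ b x} ⊆ {x | η / (1 + η) ≤ b x / (1 + b x)} :=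
    fun x hx => div_one_add_self_le_div_one_add_self hη.le hx
  calc P.real {x | η ≤ b x} ≤ P.real {x | η / (1 + η) ≤ b x / (1 + b x)} :=
        measureReal_mono hsub
    _ = (1 + η) / η * (η / (1 + η) * P.real {x | η / (1 + η) ≤ b x / (1 + b x)}) := by
        field_simp
    _ ≤ (1 + η) / η * ∫ x, b x / (1 + b x) ∂P := by gcongr

lemma integral_div_one_add_self_le_of_lt_imp_lt [IsProbabilityMeasure P] (ha0 : ∀ x, 0 ≤ a x)
    (hb : Measurable b) (hb0 : ∀ x, 0 ≤ b x) (hε : 0 ≤ ε) (hη : 0 < η)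
    (hab : ∀ x, b x < η → a x < ε) :
    ∫ x, a x / (1 + a x) ∂P ≤ ε + (1 + η) / η * ∫ x, b x / (1 + b x) ∂P := by
  set B := {x | η ≤ b x}
  have hB : MeasurableSet B := measurableSet_le measurable_const hb
  have hpt : ∀ x, a x / (1 + a x) ≤ ε + B.indicator (fun _ => 1) x := by
    intro x
    by_cases hx : x ∈ B
    · rw [Set.indicator_of_mem hx]
      linarith [div_one_add_self_le_one (ha0 x)]
    · rw [Set.indicator_of_notMem hx, add_zero]
      exact (div_one_add_self_le_self (ha0 x)).trans (hab x (not_le.1 hx)).le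
  have hint : Integrable (fun x => ε + B.indicator (fun _ => 1) x) P :=
    (integrable_const ε).add ((integrable_const 1).indicator hB)
  calc ∫ x, a x / (1 + a x) ∂P ≤ ∫ x, ε + B.indicator (fun _ => 1) x ∂P :=
        integral_mono_of_nonneg (ae_of_all _ fun x => div_one_add_self_nonneg (ha0 x)) hint
          (ae_of_all _ hpt)
    _ = ε + P.real B := by
        rw [integral_add (integrable_const ε) ((integrable_const 1).indicator hB),
          integral_const, integral_indicator_const _ hB]
        simp
    _ ≤ ε + (1 + η) / η * ∫ x, b x / (1 + b x) ∂P := by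
        gcongr
        exact measureReal_le_le_mul_integral_div_one_add_self hb hb0 hη

end ConvergenceInProbability

lemma dist_sub_zero_of_add_left {G : Type*} [AddCommGroup G] [MetricSpace G]
    (hG : ∀ a x y : G, dist (a + x) (a + y) = dist x y) (x y : G) :
    dist (x - y) 0 = dist x y := by
  simpa using (hG y (x - y) 0).symm

section DTilde

variable {G : Type} [MetricSpace G]

lemma summable_dTilde (x y : ℕ → G) :
    Summable fun n => (1 / 2 : ℝ) ^ n * (dist (x n) (y n) / (1 + dist (x n) (y n))) :=
  summable_geometric_two.of_nonneg_of_le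
    (fun n => mul_nonneg (by positivity) (div_one_add_self_nonneg dist_nonneg))
    (fun n => mul_le_of_le_one_right (by positivity) (div_one_add_self_le_one dist_nonneg))

lemma dTilde_nonneg (x y : ℕ → G) : 0 ≤ dTilde x y :=
  tsum_nonneg fun n => mul_nonneg (by positivity) (div_one_add_self_nonneg dist_nonneg)

lemma pow_mul_div_one_add_dist_le_dTilde (x y : ℕ → G) (n : ℕ) :
    (1 / 2 : ℝ) ^ n * (dist (x n) (y n) / (1 + dist (x n) (y n))) ≤ dTilde x y :=
  (summable_dTilde x y).le_tsum n fun m _ =>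
    mul_nonneg (by positivity) (div_one_add_self_nonneg dist_nonneg)

lemma dist_lt_of_dTilde_lt {x y : ℕ → G} {n : ℕ} {δ : ℝ} (hδ : 0 < δ)
    (h : dTilde x y < (1 / 2 : ℝ) ^ n * (δ / (1 + δ))) : dist (x n) (y n) < δ := by
  by_contra! hle
  have := div_one_add_self_le_div_one_add_self hδ.le hle
  have := pow_mul_div_one_add_dist_le_dTilde x y n
  nlinarith [pow_pos (by norm_num : (0 : ℝ) < 1 / 2) n]

lemma exists_pos_forall_dTilde_lt_mem {x : ℕ → G} {U : Set (ℕ → G)} (hU : U ∈ 𝓝 x) :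
    ∃ η > 0, ∀ y, dTilde y x < η → y ∈ U := by
  rw [nhds_pi, Filter.mem_pi'] at hU
  obtain ⟨I, t, ht, hIU⟩ := hU
  choose δ hδ hδt using fun i => Metric.mem_nhds_iff.1 (ht i)
  have hsmall : ∀ᶠ η in 𝓝[>] (0 : ℝ), ∀ i ∈ I, η ≤ (1 / 2 : ℝ) ^ i * (δ i / (1 + δ i)) :=
    (Filter.eventually_all_finset I).2 fun i _ =>
      eventually_nhdsWithin_of_eventually_nhds (eventually_le_nhds (by
        have := hδ i; positivity))
  obtain ⟨η, hηI, hη⟩ := (hsmall.and self_mem_nhdsWithin).exists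
  refine ⟨η, hη, fun y hy => hIU fun i hi => hδt i ?_⟩
  exact dist_lt_of_dTilde_lt (hδ i) (hy.trans_le (hηI i hi))

lemma dTilde_sub_zero [AddCommGroup G] (hG : ∀ a x y : G, dist (a + x) (a + y) = dist x y)
    (x y : ℕ → G) : dTilde (x - y) 0 = dTilde x y := by
  simp only [dTilde, Pi.sub_apply, Pi.zero_apply, dist_sub_zero_of_add_left hG]

/-- Translation invariance upgrades continuity at `0` to uniform continuity. -/
lemma exists_pos_forall_dTilde_lt_dist_lt [AddCommGroup G] {F : Type*} [AddCommGroup F]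
    [MetricSpace F] (hG : ∀ a x y : G, dist (a + x) (a + y) = dist x y)
    (hF : ∀ a x y : F, dist (a + x) (a + y) = dist x y) (Ψ : (ℕ → G) →+ F) (hΨ : Continuous Ψ)
    {ε : ℝ} (hε : 0 < ε) : ∃ η > 0, ∀ x y, dTilde x y < η → dist (Ψ x) (Ψ y) < ε := by
  have hU : Ψ ⁻¹' Metric.ball 0 ε ∈ 𝓝 0 :=
    hΨ.continuousAt.preimage_mem_nhds (by simpa using Metric.ball_mem_nhds 0 hε)
  obtain ⟨η, hη, hηU⟩ := exists_pos_forall_dTilde_lt_mem hU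
  refine ⟨η, hη, fun x y hxy => ?_⟩
  have := hηU (x - y) (by rwa [dTilde_sub_zero hG])
  rwa [Set.mem_preimage, map_sub, Metric.mem_ball, dist_sub_zero_of_add_left hF] at this

variable [SecondCountableTopology G] [MeasurableSpace G] [BorelSpace G]

lemma Measurable.dTilde {α : Type*} [MeasurableSpace α] {u v : α → ℕ → G} (hu : Measurable u)
    (hv : Measurable v) : Measurable fun a => dTilde (u a) (v a) := by
  refine Measurable.tsum fun n => measurable_const.mul ?_
  have hd : Measurable fun a => Dist.dist (u a n) (v a n) :=
    ((measurable_pi_apply n).comp hu).dist ((measurable_pi_apply n).comp hv)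
  exact hd.div (measurable_const.add hd)

end DTilde

lemma lowerDensity_mono {A B : Set ℕ} (h : A ⊆ B) : lowerDensity A ≤ lowerDensity B := by
  have hB_le_one (N : ℕ) : ((B ∩ Set.Iio N).ncard : ℝ) / N ≤ 1 := by
    refine div_le_one_of_le₀ ?_ N.cast_nonneg
    calc ((B ∩ Set.Iio N).ncard : ℝ) ≤ (Set.Iio N).ncard := by
          exact_mod_cast Set.ncard_le_ncard Set.inter_subset_right (Set.finite_Iio N)
      _ = N := by simp [Set.ncard_eq_toFinset_card']
  refine liminf_le_liminf (Eventually.of_forall fun N => ?_)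
    (isBoundedUnder_of ⟨0, fun N => by positivity⟩)
    (isCoboundedUnder_ge_of_le _ hB_le_one)
  gcongr
  exact (Set.finite_Iio N).inter_of_right _

namespace TreeData

variable {D : TreeData} {P : Measure D.Boundary}

lemma measurable_omegaMap {β : Type} [MeasurableSpace β] (f : D.Vert → β) (n : ℕ) :
    Measurable (D.omegaMap f n) := by
  intro s _
  have h : D.omegaMap f n ⁻¹' s = ⋃ x ∈ {x : D.T n | f ⟨n, x⟩ ∈ s}, D.sector n x := by
    ext e
    simp [omegaMap, sector]
  rw [h]
  exact MeasurableSet.biUnion (Set.to_countable _) fun x _ =>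
    MeasurableSpace.measurableSet_generateFrom ⟨n, x, rfl⟩

lemma FreqUnivPi.freqUniv_map [IsProbabilityMeasure P] {G : Type} [AddCommGroup G]
    [MetricSpace G] [SecondCountableTopology G] [MeasurableSpace G] [BorelSpace G]
    (hG : ∀ a x y : G, dist (a + x) (a + y) = dist x y) {f : D.Vert → ℕ → G}
    (hf : D.FreqUnivPi P f) (Ψ : (ℕ → G) →+ G) (hΨ : Continuous Ψ) {σ : G → ℕ → G}
    (hσ : Measurable σ) (hΨσ : ∀ x, Ψ (σ x) = x) : D.FreqUniv P fun v => Ψ (f v) := by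
  intro h hh ε hε
  obtain ⟨η, hη, hΨη⟩ := exists_pos_forall_dTilde_lt_dist_lt hG hG Ψ hΨ (half_pos hε)
  refine (hf (σ ∘ h) (hσ.comp hh) (η / (1 + η) * (ε / 2)) (by positivity)).trans_le
    (lowerDensity_mono fun n hn => ?_)
  have hdP : D.dP P (D.omegaMap (fun v => Ψ (f v)) n) h
      ≤ ε / 2 + (1 + η) / η * D.dPgen P dTilde (D.omegaMap f n) (σ ∘ h) :=
    integral_div_one_add_self_le_of_lt_imp_lt (fun _ => dist_nonneg)
      ((measurable_omegaMap f n).dTilde (hσ.comp hh)) (fun _ => dTilde_nonneg _ _)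
      (half_pos hε).le hη fun e he => by simpa [omegaMap, hΨσ] using hΨη _ _ he
  calc D.dP P (D.omegaMap (fun v => Ψ (f v)) n) h
      ≤ ε / 2 + (1 + η) / η * D.dPgen P dTilde (D.omegaMap f n) (σ ∘ h) := hdP
    _ < ε / 2 + (1 + η) / η * (η / (1 + η) * (ε / 2)) := by gcongr; exact hn
    _ = ε := by field_simp; ring

end TreeData

theorem span_of_components_freqUniv_general (D : TreeData)
    (hdist : ∀ a x y : E, dist (a + x) (a + y) = dist x y)
    (P : Measure D.Boundary) [IsProbabilityMeasure P]
    (f : D.Vert → (ℕ → E))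
    (hfm : D.FreqUnivPi P f) :
    ∀ g : D.Vert → E,
      g ∈ Submodule.span 𝔽 {g' : D.Vert → E | ∃ j : ℕ, g' = fun v => f v j} →
      g ≠ 0 → D.FreqUniv P g := by
  intro g hg hg0
  obtain ⟨c, rfl⟩ : ∃ c : ℕ →₀ 𝔽, (c.sum fun j a => a • fun v => f v j) = g := by
    refine Finsupp.mem_span_range_iff_exists_finsupp.1 ?_
    convert hg using 3
    simp [Set.range, eq_comm]
  have hc : c ≠ 0 := by
    rintro rfl
    simp at hg0
  obtain ⟨j₀, hj₀⟩ : ∃ j, c j ≠ 0 := Finsupp.ne_iff.1 hc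
  let Ψ : (ℕ → E) →ₗ[𝔽] E := c.sum fun j a => a • LinearMap.proj j
  let σ : E → ℕ → E := fun x => Pi.single j₀ ((c j₀)⁻¹ • x)
  have hΨ (u : ℕ → E) : Ψ u = c.sum fun j a => a • u j := LinearMap.finsupp_sum_apply _ _ u
  have hΨ_cont : Continuous Ψ := by
    simp only [funext hΨ, Finsupp.sum]
    fun_prop
  have hσ : Measurable σ := (continuous_single j₀).measurable.comp (measurable_const_smul _)
  have hΨσ (x : E) : Ψ (σ x) = x := by simp [σ, hΨ, Pi.single_apply, hj₀, smul_inv_smul₀]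
  have hg : (c.sum fun j a => a • fun v => f v j) = fun v => Ψ (f v) := by
    ext v
    simp [hΨ, Finsupp.sum, Finset.sum_apply]
  rw [hg]
  exact hfm.freqUniv_map hdist Ψ.toAddMonoidHom hΨ_cont hσ hΨσ

/-- Assume Σ_{y ∈ S(x)} w(x,y) = 1. If f = (f₀, f₁, …) ∈ U_FM(T, E^ℕ)
with each component f_j ∈ H(T,E), then the linear span of the components is contained
in U_FM(T,E) ∪ {0}. -/
theorem span_of_components_freqUniv (D : TreeData)
    (w : ∀ n, D.T (n + 1) → 𝔽) (hw : ∀ n y, w n y ≠ 0)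
    (hdist : ∀ a x y : E, dist (a + x) (a + y) = dist x y)
    (q : ∀ n, D.T (n + 1) → ℝ) (hq0 : ∀ n y, 0 < q n y)
    (hq1 : ∀ n (x : D.T n), ∑ y : {y : D.T (n + 1) // D.par n y = x}, q n y.1 = 1)
    (P : Measure D.Boundary) [IsProbabilityMeasure P]
    (hP : ∀ n (x : D.T n), P (D.sector n x) = ENNReal.ofReal (D.pathProb q n x))
    (hw1 : ∀ n (x : D.T n), ∑ y : {y : D.T (n + 1) // D.par n y = x}, w n y.1 = 1)
    (f : D.Vert → (ℕ → E))
    (hharm : D.Harmonic w f)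
    (hcomp : ∀ j : ℕ, (fun v => f v j) ∈ D.harmonicSet E w)
    (hfm : D.FreqUnivPi P f) :
    ∀ g : D.Vert → E,
      g ∈ Submodule.span 𝔽 {g' : D.Vert → E | ∃ j : ℕ, g' = fun v => f v j} →
      g ≠ 0 → D.FreqUniv P g :=
  span_of_components_freqUniv_general D hdist P f hfm
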